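/- Let β ∈ ℂ, τ_i ∈ ℝ, ν_i ∈ ℝ with ν_i ≠ 0, and f_c > 0. Define H(t,f) = β · exp(2πi·(ν_i/f_c)·(f_c+f)·t) · exp(−2πi·f·τ_i). Then the 2D symplectic Fourier transform h(τ,ν) = ∫∫ H(t,f) · exp(−2πi(νt − τf)) dt df (in the distributional sense) equals β · |f_c/ν_i| · exp(2πi·(f_c/ν_i)·(τ−τ_i)·(ν−ν_i)). -/

import Mathlib

open MeasureTheory Complex Real

open scoped FourierTransform SchwartzMap

/-!
Write `g_t(τ) = ∫ φ(τ, ν) e^{-2πiνt} dν` for the partial Fourier transform of the test function.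
The inner double integral is the inverse Fourier transform of `g_t` at `f`, and the frequency
dependence of `H(t, ·)` is the pure phase `e^{2πi f ((ν_i/f_c) t - τ_i)}`, so Fourier inversion
collapses the `f`-integral to `g_t(τ_i - (ν_i/f_c) t)`: this is the Dirac delta of the paper.
The substitution `t = (f_c/ν_i)(τ_i - τ)` in the remaining `t`-integral produces the factor
`|f_c/ν_i|` and the stated phase. Fourier inversion applies because `g_t` is continuous and
integrable and its Fourier transform is a slice of the two-dimensional Fourier transform of `φ`,
which is again a Schwartz function.
-/

theorem SchwartzMap.exists_norm_le_inv_one_add_sq {E F : Type*} [NormedAddCommGroup E]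
    [NormedSpace ℝ E] [NormedAddCommGroup F] [NormedSpace ℝ F] (ψ : 𝓢(E, F)) :
    ∃ C, ∀ x (r : ℝ), |r| ≤ ‖x‖ → ‖ψ x‖ ≤ C * (1 + r ^ 2)⁻¹ := by
  refine ⟨2 ^ 2 * (Finset.Iic (2, 0)).sup (fun m => SchwartzMap.seminorm ℝ m.1 m.2) ψ,
    fun x r hr => ?_⟩
  have hdecay := ψ.one_add_le_sup_seminorm_apply (𝕜 := ℝ) (m := (2, 0)) le_rfl le_rfl x
  rw [norm_iteratedFDeriv_zero] at hdecay
  have hr2 : 1 + r ^ 2 ≤ (1 + ‖x‖) ^ 2 := by nlinarith [abs_nonneg r, sq_abs r, norm_nonneg x]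
  rw [← div_eq_mul_inv, le_div_iff₀ (by positivity)]
  calc ‖ψ x‖ * (1 + r ^ 2) ≤ (1 + ‖x‖) ^ 2 * ‖ψ x‖ := by rw [mul_comm]; gcongr
    _ ≤ _ := hdecay

theorem MeasureTheory.Integrable.fourierChar_smul {α : Type*} [MeasurableSpace α] {μ : Measure α}
    {F : α → ℂ} (hF : Integrable F μ) {g : α → ℝ} (hg : Measurable g) :
    Integrable (fun x => 𝐞 (g x) • F x) μ :=
  hF.mono ((Real.continuous_fourierChar.comp_aestronglyMeasurable hg.aestronglyMeasurable).smul
    hF.aestronglyMeasurable) (ae_of_all _ fun x => by rw [Circle.norm_smul])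

theorem Continuous.fourierInv_fourierInv_eq_neg {V E : Type*} [NormedAddCommGroup V]
    [InnerProductSpace ℝ V] [FiniteDimensional ℝ V] [MeasurableSpace V] [BorelSpace V]
    [NormedAddCommGroup E] [NormedSpace ℂ E] [CompleteSpace E] {G : V → E} (hc : Continuous G)
    (hG : Integrable G) (hFG : Integrable (𝓕 G)) (x : V) : 𝓕⁻ (𝓕⁻ G) x = G (-x) := by
  rw [fourierInv_eq_fourier_neg, hc.fourier_fourierInv_eq hG hFG]

theorem integral_cexp_mul_fourierInv {G : ℝ → ℂ} (hc : Continuous G) (hG : Integrable G)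
    (hFG : Integrable (𝓕 G)) (a : ℝ) :
    ∫ f : ℝ, cexp (2 * π * I * f * a) * 𝓕⁻ G f = G (-a) := by
  rw [← hc.fourierInv_fourierInv_eq_neg hG hFG, fourierInv_eq']
  congr! 2 with f
  rw [smul_eq_mul, RCLike.inner_apply, conj_trivial]
  congr 2
  push_cast
  ring

theorem integral_eq_abs_smul_integral_comp_mul_sub {E : Type*} [NormedAddCommGroup E]
    [NormedSpace ℝ E] (F : ℝ → E) {c : ℝ} (hc : c ≠ 0) (a : ℝ) :
    ∫ t, F t = |c| • ∫ τ, F (c * (a - τ)) := by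
  rw [integral_sub_left_eq_self (fun τ => F (c * τ)) volume a, Measure.integral_comp_mul_left,
    smul_smul, ← abs_mul, mul_inv_cancel₀ hc, abs_one, one_smul]

noncomputable def partialFourierSnd (φ : ℝ × ℝ → ℂ) (t τ : ℝ) : ℂ :=
  𝓕 (fun ν => φ (τ, ν)) t

noncomputable def symplecticFourier (φ : ℝ × ℝ → ℂ) (t f : ℝ) : ℂ :=
  ∫ τ : ℝ, ∫ ν : ℝ, φ (τ, ν) * cexp (-(2 * π * I) * (ν * t - τ * f))

theorem partialFourierSnd_apply (φ : ℝ × ℝ → ℂ) (t τ : ℝ) :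
    partialFourierSnd φ t τ = ∫ ν : ℝ, 𝐞 (-(ν * t)) • φ (τ, ν) :=
  Real.fourier_real_eq _ _

theorem symplecticFourier_eq_fourierInv_partialFourierSnd (φ : ℝ × ℝ → ℂ) (t f : ℝ) :
    symplecticFourier φ t f = 𝓕⁻ (partialFourierSnd φ t) f := by
  rw [symplecticFourier, fourierInv_eq']
  congr 1; ext τ
  rw [partialFourierSnd_apply, ← integral_smul]
  congr 1; ext ν
  rw [smul_eq_mul, RCLike.inner_apply, conj_trivial, Circle.smul_def, Real.fourierChar_apply,
    smul_eq_mul, ← mul_assoc, mul_comm _ (φ _), mul_assoc, ← Complex.exp_add]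
  congr 2
  push_cast
  ring

theorem integrable_partialFourierSnd {φ : ℝ × ℝ → ℂ} (hφ : Integrable φ) (t : ℝ) :
    Integrable (partialFourierSnd φ t) := by
  exact (hφ.fourierChar_smul (g := fun p => -(p.2 * t)) (by fun_prop)).integral_prod_left.congr
    (ae_of_all _ fun τ => (partialFourierSnd_apply φ t τ).symm)

theorem continuous_partialFourierSnd (φ : 𝓢(ℝ × ℝ, ℂ)) (t : ℝ) :
    Continuous (partialFourierSnd φ t) := by
  obtain ⟨C, hC⟩ := φ.exists_norm_le_inv_one_add_sq
  simp_rw [funext (partialFourierSnd_apply φ t)]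
  refine continuous_of_dominated (bound := fun ν => C * (1 + ν ^ 2)⁻¹)
    (fun τ => by fun_prop) (fun τ => ae_of_all _ fun ν => ?_)
    (integrable_inv_one_add_sq.const_mul C) (ae_of_all _ fun ν => by fun_prop)
  rw [Circle.norm_smul]
  exact hC _ _ (by simp)

-- `ℝ × ℝ` carries the sup norm, so the plane Fourier transform lives on `WithLp 2 (ℝ × ℝ)`.
theorem fourier_partialFourierSnd {φ : ℝ × ℝ → ℂ} (hφ : Integrable φ) (t f : ℝ) :
    𝓕 (partialFourierSnd φ t) f
      = 𝓕 (φ ∘ WithLp.ofLp : WithLp 2 (ℝ × ℝ) → ℂ) (WithLp.toLp 2 (f, t)) := by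
  calc 𝓕 (partialFourierSnd φ t) f = ∫ τ, ∫ ν, 𝐞 (-(τ * f + ν * t)) • φ (τ, ν) := by
        rw [Real.fourier_real_eq]
        congr 1; ext τ
        rw [partialFourierSnd_apply, Circle.smul_def, ← integral_smul]
        simp_rw [Circle.smul_def, smul_smul, ← Circle.coe_mul, ← AddChar.map_add_eq_mul, neg_add]
    _ = ∫ p : ℝ × ℝ, 𝐞 (-(p.1 * f + p.2 * t)) • φ p :=
        (integral_prod _ (hφ.fourierChar_smul
          (by fun_prop : Measurable fun p : ℝ × ℝ => -(p.1 * f + p.2 * t)))).symm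
    _ = ∫ x : WithLp 2 (ℝ × ℝ), 𝐞 (-(x.ofLp.1 * f + x.ofLp.2 * t)) • φ x.ofLp :=
        ((WithLp.volume_preserving_symm_measurableEquiv_toLp_prod ℝ ℝ).integral_comp'
          (fun p : ℝ × ℝ => 𝐞 (-(p.1 * f + p.2 * t)) • φ p)).symm
    _ = _ := by
        rw [Real.fourier_eq]
        congr 1; ext x
        rw [Function.comp_apply, WithLp.prod_inner_apply, WithLp.ofLp_toLp, RCLike.inner_apply,
          RCLike.inner_apply, conj_trivial, conj_trivial, mul_comm f, mul_comm t]

theorem integrable_fourier_partialFourierSnd (φ : 𝓢(ℝ × ℝ, ℂ)) (t : ℝ) :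
    Integrable (𝓕 (partialFourierSnd φ t)) := by
  set Φ : 𝓢(WithLp 2 (ℝ × ℝ), ℂ) :=
    𝓕 (SchwartzMap.compCLMOfContinuousLinearEquiv ℝ (WithLp.prodContinuousLinearEquiv 2 ℝ ℝ ℝ) φ)
  have hΦ : 𝓕 (partialFourierSnd φ t) = fun f => Φ (WithLp.toLp 2 (f, t)) :=
    funext (fourier_partialFourierSnd φ.integrable t)
  obtain ⟨C, hC⟩ := Φ.exists_norm_le_inv_one_add_sq
  rw [hΦ]
  refine (integrable_inv_one_add_sq.const_mul C).mono' (by fun_prop)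
    (ae_of_all _ fun f => hC _ _ ?_)
  simpa using WithLp.norm_fst_le ℝ (WithLp.toLp 2 (f, t))

theorem cexp_squint_phase_eq {fc : ℝ} (hfc : fc ≠ 0) (νi τi t f : ℝ) :
    cexp (2 * π * I * (νi / fc) * (fc + f) * t) * cexp (-(2 * π * I) * f * τi)
      = cexp (2 * π * I * νi * t) * cexp (2 * π * I * f * ((νi / fc * t - τi : ℝ) : ℂ)) := by
  have hfc' : (fc : ℂ) ≠ 0 := by exact_mod_cast hfc
  rw [← Complex.exp_add, ← Complex.exp_add]
  congr 1
  push_cast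
  field_simp
  ring

theorem cexp_delay_doppler_phase_eq {νi : ℝ} (hν : νi ≠ 0) (fc τi τ ν : ℝ) :
    cexp (2 * π * I * νi * ((fc / νi * (τi - τ) : ℝ) : ℂ))
      * cexp (((2 * π * -(ν * (fc / νi * (τi - τ))) : ℝ) : ℂ) * I)
      = cexp (2 * π * I * (fc / νi) * (τ - τi) * (ν - νi)) := by
  have hν' : (νi : ℂ) ≠ 0 := by exact_mod_cast hν
  rw [← Complex.exp_add]
  congr 1
  push_cast
  field_simp
  ring

theorem integral_cexp_mul_symplecticFourier (φ : 𝓢(ℝ × ℝ, ℂ)) (t a : ℝ) (b : ℂ) :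
    ∫ f : ℝ, b * cexp (2 * π * I * f * a) * symplecticFourier φ t f
      = b * partialFourierSnd φ t (-a) := by
  simp only [symplecticFourier_eq_fourierInv_partialFourierSnd, mul_assoc b]
  rw [integral_const_mul, integral_cexp_mul_fourierInv (continuous_partialFourierSnd φ t)
    (integrable_partialFourierSnd φ.integrable t) (integrable_fourier_partialFourierSnd φ t)]

/-- The delay-Doppler response (distributional symplectic Fourier transform) of a
single-path time-variant frequency response with Doppler Squint Effect equals
`β * |f_c/ν_i| * exp(2πi (f_c/ν_i)(τ−τ_i)(ν−ν_i))`, stated in the sense of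
tempered distributions (tested against Schwartz functions). -/
theorem stmt0 (β : ℂ) (τi νi fc : ℝ) (hν : νi ≠ 0) (hfc : 0 < fc)
    (H h : ℝ → ℝ → ℂ)
    (hH : ∀ t f : ℝ, H t f =
      β * Complex.exp (2 * (π : ℂ) * Complex.I * ((νi : ℂ)/(fc : ℂ)) * ((fc : ℂ) + f) * t)
        * Complex.exp (-(2 * (π : ℂ) * Complex.I) * f * τi))
    (hh : ∀ τ ν : ℝ, h τ ν =
      β * (|fc / νi| : ℝ)
        * Complex.exp (2 * (π : ℂ) * Complex.I * ((fc : ℂ)/(νi : ℂ)) * ((τ : ℂ) - τi) * ((ν : ℂ) - νi))) :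
    ∀ φ : SchwartzMap (ℝ × ℝ) ℂ,
      (∫ t : ℝ, ∫ f : ℝ, H t f *
        ∫ τ : ℝ, ∫ ν : ℝ, φ (τ, ν) *
          Complex.exp (-(2 * (π : ℂ) * Complex.I) * ((ν : ℂ) * t - (τ : ℂ) * f)))
      = ∫ τ : ℝ, ∫ ν : ℝ, h τ ν * φ (τ, ν) := by
  intro φ
  have hinner : ∀ t : ℝ, ∫ f : ℝ, H t f * symplecticFourier φ t f
      = β * cexp (2 * π * I * νi * t) * partialFourierSnd φ t (τi - νi / fc * t) := fun t => by
    simp_rw [hH, mul_assoc β, cexp_squint_phase_eq hfc.ne', ← mul_assoc β,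
      integral_cexp_mul_symplecticFourier, neg_sub]
  have harg : ∀ τ : ℝ, τi - νi / fc * (fc / νi * (τi - τ)) = τ := fun τ => by
    field_simp
    ring
  calc _ = ∫ t : ℝ, β * cexp (2 * π * I * νi * t) * partialFourierSnd φ t (τi - νi / fc * t) :=
        integral_congr_ae (ae_of_all _ hinner)
    _ = |fc / νi| • ∫ τ : ℝ, β * cexp (2 * π * I * νi * ((fc / νi * (τi - τ) : ℝ) : ℂ))
          * partialFourierSnd φ (fc / νi * (τi - τ)) τ := by
        rw [integral_eq_abs_smul_integral_comp_mul_sub _ (div_ne_zero hfc.ne' hν) τi]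
        simp only [harg]
    _ = _ := by
        rw [← integral_smul]
        congr 1 with τ
        rw [partialFourierSnd_apply, ← integral_const_mul, ← integral_smul]
        congr 1 with ν
        rw [hh, Circle.smul_def, Real.fourierChar_apply, smul_eq_mul, Complex.real_smul,
          ← cexp_delay_doppler_phase_eq hν]
        ring
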